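/- arXiv:1006.2297 — 3 statements merged into one kernel-verified Lean document; each statement's English description precedes it below -/
import Mathlib

section
/- Let F be a free group, let H be a normal subgroup of F of finite index m, and let t_1,…,t_p ∈ F be elements such that each coset t_kH has the same order d ≥ 2 in the finite group G = F/H (so t_k^d ∈ H for all k). For each k, let u_{1,k},…,u_{m/d,k} ∈ F be representatives of the m/d right cosets of the cyclic subgroup ⟨t_kH⟩ in G. Then the normal closure in F of {t_1^d,…,t_p^d} equals the normal closure in H of the set of elements {u_{j,k}^{-1} t_k^d u_{j,k} : k ∈ {1,…,p}, j ∈ {1,…,m/d}}. -/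
namespace Paper

/-- **Lemma (paper, Lemma 4.3)**: let `F` be a free group, `H` a normal
subgroup of finite index `m`, and `t_1,…,t_p ∈ F` elements whose cosets `t_kH`
all have the same order `d ≥ 2` in `G = F/H`.  For each `k`, let
`u_{1,k},…,u_{m/d,k}` be representatives of the `m/d` right cosets of the
cyclic subgroup `⟨t_kH⟩` in `G`.  Then the normal closure in `F` of
`{t_1^d,…,t_p^d}` equals the normal closure in `H` of
`{u_{j,k}⁻¹ t_k^d u_{j,k}}` (the subgroup generated by all `H`-conjugates of
these elements). -/
theorem normal_closure_lemma {α : Type} (H : Subgroup (FreeGroup α)) [H.Normal]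
    (m : ℕ) (hm : H.index = m) (hm0 : m ≠ 0)
    (p d : ℕ) (hd : 2 ≤ d)
    (t : Fin p → FreeGroup α)
    (ht : ∀ k : Fin p,
      orderOf (QuotientGroup.mk (t k) : FreeGroup α ⧸ H) = d)
    (u : Fin p → Fin (m / d) → FreeGroup α)
    (hu : ∀ (k : Fin p) (x : FreeGroup α ⧸ H), ∃! j : Fin (m / d),
      x * (QuotientGroup.mk (u k j) : FreeGroup α ⧸ H)⁻¹ ∈
        Subgroup.zpowers (QuotientGroup.mk (t k) : FreeGroup α ⧸ H)) :
    Subgroup.normalClosure {w : FreeGroup α | ∃ k : Fin p, w = t k ^ d} =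
      Subgroup.closure {w : FreeGroup α | ∃ (k : Fin p) (j : Fin (m / d)),
        ∃ h ∈ H, w = h⁻¹ * ((u k j)⁻¹ * t k ^ d * u k j) * h} := by
  apply le_antisymm
  · rw [Subgroup.normalClosure]
    apply Subgroup.closure_mono
    intro a ha
    rw [Group.mem_conjugatesOfSet_iff] at ha
    obtain ⟨b, ⟨k, rfl⟩, c, hc⟩ := ha
    -- a = c * t k ^ d * c⁻¹
    obtain ⟨j, hj, -⟩ := hu k (QuotientGroup.mk c⁻¹)
    obtain ⟨n, hn⟩ := hj
    -- (mk (t k))^n = mk c⁻¹ * (mk (u k j))⁻¹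
    set g : FreeGroup α := c⁻¹ with hg
    have hmem : (u k j)⁻¹ * (t k) ^ (-n) * g ∈ H := by
      rw [← QuotientGroup.eq_one_iff]
      have : ((QuotientGroup.mk (t k) : FreeGroup α ⧸ H)) ^ n
          = QuotientGroup.mk g * (QuotientGroup.mk (u k j))⁻¹ := hn
      push_cast [QuotientGroup.mk_mul, QuotientGroup.mk_inv, QuotientGroup.mk_zpow]
      rw [zpow_neg, this]
      group
    refine ⟨k, j, (u k j)⁻¹ * (t k) ^ (-n) * g, hmem, ?_⟩
    have ha : a = ↑c * t k ^ d * (↑c)⁻¹ := by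
      exact eq_mul_inv_of_mul_eq hc.eq.symm
    rw [ha, hg]
    group
  · rw [Subgroup.closure_le]
    rintro w ⟨k, j, h, hh, rfl⟩
    have h1 : t k ^ d ∈ Subgroup.normalClosure
        {w : FreeGroup α | ∃ k : Fin p, w = t k ^ d} :=
      Subgroup.subset_normalClosure ⟨k, rfl⟩
    have inst := Subgroup.normalClosure_normal
      (s := {w : FreeGroup α | ∃ k : Fin p, w = t k ^ d})
    have h2 := inst.conj_mem _ h1 ((u k j) * h)⁻¹
    simpa [mul_assoc] using h2
end Paper
end

section
/- Let p ≥ 1, let k₀ ∈ {1,…,p}, and let w ∈ Σ_{g,1,p} be an element whose reduced word does not end in t_{k₀} or t_{k₀}^{-1}. Then, in (∂Σ_{g,1,p}, ≤), every end in the shadow (w t_{k₀} t_{k₀} ◀) is strictly smaller than every end in the shadow (w t_{k₀}^{-1} t_{k₀}^{-1} ◀); that is, the maximum of (w t_{k₀} t_{k₀} ◀) is strictly smaller than the minimum of (w t_{k₀}^{-1} t_{k₀}^{-1} ◀). -/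
namespace Paper

/-- Generators of the free group `Σ_{g,1,p}`: `x_1,…,x_g`, `y_1,…,y_g`, `t_1,…,t_p`. -/
inductive Gen (g p : ℕ) : Type
  | x : Fin g → Gen g p
  | y : Fin g → Gen g p
  | t : Fin p → Gen g p
  deriving DecidableEq

/-- `Σ_{g,1,p}`, the free group of rank `2g+p`. -/
abbrev Sig (g p : ℕ) := FreeGroup (Gen g p)

def X (g p : ℕ) (i : Fin g) : Sig g p := FreeGroup.of (Gen.x i)
def Y (g p : ℕ) (i : Fin g) : Sig g p := FreeGroup.of (Gen.y i)
def T (g p : ℕ) (k : Fin p) : Sig g p := FreeGroup.of (Gen.t k)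

open scoped commutatorElement in
/-- `[x_1,y_1]⋯[x_g,y_g]`. -/
def comms (g p : ℕ) : Sig g p := (List.ofFn fun i : Fin g => ⁅X g p i, Y g p i⁆).prod

/-- `t_1⋯t_p`. -/
def tprod (g p : ℕ) : Sig g p := (List.ofFn fun k : Fin p => T g p k).prod

/-- The boundary word `z̄₁ = [x_1,y_1]⋯[x_g,y_g]·t_1⋯t_p`. -/
def zbar (g p : ℕ) : Sig g p := comms g p * tprod g p

/-- `z₁ = z̄₁⁻¹`. -/
def zone (g p : ℕ) : Sig g p := (zbar g p)⁻¹

/-- Membership in the algebraic mapping-class group `AM_{g,1,p}`: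
automorphisms fixing the boundary word `z̄₁` and permuting the set of
conjugacy classes `{[t_1⁻¹],…,[t_p⁻¹]}`. -/
def IsAM {g p : ℕ} (φ : Sig g p ≃* Sig g p) : Prop :=
  φ (zbar g p) = zbar g p ∧
  ∃ π : Equiv.Perm (Fin p), ∀ k : Fin p, IsConj ((T g p (π k))⁻¹) (φ ((T g p k)⁻¹))

/-- The inverse of a letter. -/
def linv {β : Type} (a : β × Bool) : β × Bool := (a.1, !a.2)

/-- An infinite sequence of letters; the ends of the free group on `β` are the
reduced ones. -/
abbrev EndSeq (β : Type) := ℕ → β × Bool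

/-- A sequence of letters is an end when it is reduced: no letter is followed
by its inverse. -/
def IsEnd {β : Type} (e : EndSeq β) : Prop := ∀ i, e (i + 1) ≠ linv (e i)

/-- Prepend a letter to an infinite sequence, performing one cancellation. -/
def prependL {β : Type} [DecidableEq β] (a : β × Bool) (e : EndSeq β) : EndSeq β :=
  if e 0 = linv a then fun i => e (i + 1)
  else fun i => match i with
    | 0 => a
    | j + 1 => e j

/-- The action of a group element `u` on ends: left multiplication by `u`
followed by reduction, written `u(e)` in the paper. -/
def act {β : Type} [DecidableEq β] (u : FreeGroup β) (e : EndSeq β) : EndSeq β :=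
  u.toWord.foldr prependL e

/-- The periodic sequence repeating the list `l` (with a default letter `d`,
irrelevant when `l ≠ []`): for cyclically reduced `w ≠ 1`, applied to the
reduced word of `w` this is the end `w^∞ = www⋯`. -/
def perEnd {β : Type} (l : List (β × Bool)) (d : β × Bool) : EndSeq β :=
  fun i => l.getD (i % l.length) d

/-- The rank of the letter `a` in the ordering determined by the associated
sequence `s` and by the preceding letter (`none` at the start of a word;
`some c` after a prefix ending with the letter `c`): after a prefix ending with
`c`, the letters are ordered cyclically starting just after `c⁻¹`. -/
def rank {β : Type} [DecidableEq β] (s : List (β × Bool)) (c? : Option (β × Bool))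
    (a : β × Bool) : ℕ :=
  match c? with
  | none => s.idxOf a
  | some c => (s.idxOf a + s.length - s.idxOf (linv c)) % s.length

/-- The strict ordering `<_s` on ends determined by a sequence `s` listing the
letters: two distinct ends are compared at the first place where they differ,
via `rank` relative to the common prefix. -/
def endLT {β : Type} [DecidableEq β] (s : List (β × Bool)) (e f : EndSeq β) : Prop :=
  ∃ i : ℕ, (∀ j, j < i → e j = f j) ∧ e i ≠ f i ∧
    rank s (if i = 0 then none else some (e (i - 1))) (e i) <
      rank s (if i = 0 then none else some (f (i - 1))) (f i)

/-- The ordering `≤_s` on ends. -/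
def endLE {β : Type} [DecidableEq β] (s : List (β × Bool)) (e f : EndSeq β) : Prop :=
  e = f ∨ endLT s e f

/-- The shadow `(u◀)`: ends whose initial segment is the reduced word of `u`. -/
def shadow {β : Type} [DecidableEq β] (u : FreeGroup β) : Set (EndSeq β) :=
  {e | IsEnd e ∧ ∀ (j : ℕ) (h : j < u.toWord.length), e j = u.toWord.get ⟨j, h⟩}

/-- `e` is the minimum of `S` for the ordering determined by `s`. -/
def IsMinIn {β : Type} [DecidableEq β] (s : List (β × Bool)) (S : Set (EndSeq β))
    (e : EndSeq β) : Prop :=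
  e ∈ S ∧ ∀ f ∈ S, endLE s e f

/-- `e` is the maximum of `S` for the ordering determined by `s`. -/
def IsMaxIn {β : Type} [DecidableEq β] (s : List (β × Bool)) (S : Set (EndSeq β))
    (e : EndSeq β) : Prop :=
  e ∈ S ∧ ∀ f ∈ S, endLE s f e

/-- The interval `[e ↑ f]` of ends between `e` and `f`. -/
def intervalE {β : Type} [DecidableEq β] (s : List (β × Bool)) (e f : EndSeq β) :
    Set (EndSeq β) :=
  {h | IsEnd h ∧ endLE s e h ∧ endLE s h f}

/-- The standard associated sequence
`(x̄_1, y_1, x_1, ȳ_1, …, x̄_g, y_g, x_g, ȳ_g, t_1, t̄_1, …, t_p, t̄_p)`,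
defining the standard ordering `<` on `∂Σ_{g,1,p}`. -/
def stdSeq (g p : ℕ) : List (Gen g p × Bool) :=
  ((List.finRange g).flatMap fun i =>
    [(Gen.x i, false), (Gen.y i, true), (Gen.x i, true), (Gen.y i, false)]) ++
  ((List.finRange p).flatMap fun k => [(Gen.t k, true), (Gen.t k, false)])

/-- The end `z̄₁^∞`. -/
def zbarInf (g p : ℕ) (hp : 0 < p) : EndSeq (Gen g p) :=
  perEnd (zbar g p).toWord (Gen.t ⟨0, hp⟩, true)

/-- The end `z₁^∞`. -/
def zoneInf (g p : ℕ) (hp : 0 < p) : EndSeq (Gen g p) :=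
  perEnd (zone g p).toWord (Gen.t ⟨0, hp⟩, true)

/-- The cyclic rotation `t_{k+1}⋯t_p·[x_1,y_1]⋯[x_g,y_g]·t_1⋯t_k` of `z̄₁`
(here `k` is 0-based: `k` letters `t` are moved to the back, so for
`k₀ : Fin p` the word `rotT g p k₀.val` is `t_{k₀}⋯t_p·[x_1,y_1]⋯[x_g,y_g]·t_1⋯t_{k₀-1}`
in the 1-based notation of the paper). -/
def rotT (g p : ℕ) (k : ℕ) : Sig g p :=
  (((List.finRange p).drop k).map (T g p)).prod * comms g p *
    (((List.finRange p).take k).map (T g p)).prod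

/-- The end `(t_{k+1}⋯t_p·[x_1,y_1]⋯[x_g,y_g]·t_1⋯t_k)^∞` (0-based `k`). -/
def rotInf (g p : ℕ) (hp : 0 < p) (k : ℕ) : EndSeq (Gen g p) :=
  perEnd (rotT g p k).toWord (Gen.t ⟨0, hp⟩, true)

/-- The end `(t̄_k⋯t̄_1·[y_g,x_g]⋯[y_1,x_1]·t̄_p⋯t̄_{k+1})^∞` (0-based `k`). -/
def rotInvInf (g p : ℕ) (hp : 0 < p) (k : ℕ) : EndSeq (Gen g p) :=
  perEnd ((rotT g p k)⁻¹).toWord (Gen.t ⟨0, hp⟩, true)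

/-- The reduced word of `w` does not end in `t_k` or `t_k⁻¹`,
i.e. `w ∉ (⋆t_k) ∪ (⋆t̄_k)`. -/
def NotEndT {g p : ℕ} (w : Sig g p) (k : Fin p) : Prop :=
  ∀ b : Bool, w.toWord.getLast? ≠ some (Gen.t k, b)

/-!
Ends in the two shadows share the prefix `w` and first differ at position `|w|`, where one reads
`t_{k₀}` and the other `t̄_{k₀}`; both words are reduced as written because `w` ends in neither
`t̄_{k₀}` nor `t_{k₀}`. In the standard sequence `t̄_{k₀}` comes right after `t_{k₀}`, so in the cyclic
order used after the last letter `c` of `w` (starting just after `c⁻¹`) the letter `t_{k₀}` comes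
first, unless that cyclic order starts exactly at `t̄_{k₀}`, i.e. `c = t_{k₀}`, which is excluded.
-/

section Words

variable {β : Type}

@[simp]
theorem linv_linv (a : β × Bool) : linv (linv a) = a := by
  simp [linv]

theorem toWord_mul_mk_singleton [DecidableEq β] (w : FreeGroup β) (x : β × Bool)
    (h : w.toWord.getLast? ≠ some (linv x)) :
    (w * FreeGroup.mk [x]).toWord = w.toWord ++ [x] := by
  rw [FreeGroup.toWord_mul, FreeGroup.toWord_mk, FreeGroup.reduce_singleton]
  refine FreeGroup.IsReduced.reduce_eq (List.IsChain.append FreeGroup.isReduced_toWord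
    (List.isChain_singleton x) ?_)
  intro c hc y hy hfst
  rw [List.head?_singleton, Option.mem_some_iff] at hy
  subst hy
  by_contra hsnd
  exact h (by rw [Option.mem_def.1 hc, linv, ← hfst, ← Bool.eq_not.2 hsnd])

def StartsWith (e : EndSeq β) (L : List (β × Bool)) : Prop :=
  ∀ j (h : j < L.length), e j = L[j]

theorem StartsWith.of_prefix {e : EndSeq β} {L L' : List (β × Bool)} (he : StartsWith e L)
    (h : L' <+: L) : StartsWith e L' := fun j hj => by
  rw [he j (hj.trans_le h.length_le), h.getElem]

theorem StartsWith.prev_eq_getLast? {e : EndSeq β} {L : List (β × Bool)} (he : StartsWith e L) :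
    (if L.length = 0 then none else some (e (L.length - 1))) = L.getLast? := by
  rcases L.eq_nil_or_concat with rfl | ⟨L, a, rfl⟩
  · simp
  · simp [he L.length (by simp)]

theorem StartsWith.of_mem_shadow_mul_mk [DecidableEq β] {e : EndSeq β} {u : FreeGroup β}
    {x : β × Bool} (hx : u.toWord.getLast? ≠ some (linv x)) (he : e ∈ shadow (u * FreeGroup.mk [x])) :
    StartsWith e u.toWord :=
  StartsWith.of_prefix he.2 ⟨[x], (toWord_mul_mk_singleton u x hx).symm⟩

end Words

section Ordering

variable {β : Type} [DecidableEq β]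

theorem mod_sub_lt_mod_sub_succ {m d n : ℕ} (hm : m + 1 < n) (hd : d ≤ n) (hdm : d ≠ m + 1) :
    (m + n - d) % n < (m + 1 + n - d) % n := by
  rcases le_or_gt d m with hle | hgt
  · rw [show m + n - d = m - d + n by omega, show m + 1 + n - d = m + 1 - d + n by omega,
      Nat.add_mod_right, Nat.add_mod_right, Nat.mod_eq_of_lt (by omega),
      Nat.mod_eq_of_lt (by omega)]
    omega
  · rw [Nat.mod_eq_of_lt (by omega), Nat.mod_eq_of_lt (by omega)]
    omega

theorem rank_lt_rank_of_idxOf_eq_succ {s : List (β × Bool)} {c? : Option (β × Bool)}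
    {a b : β × Bool} (hb : b ∈ s) (hab : s.idxOf b = s.idxOf a + 1) (hc : c? ≠ some (linv b)) :
    rank s c? a < rank s c? b := by
  cases c? with
  | none => simp [rank, hab]
  | some c =>
    have hc_ne : s.idxOf (linv c) ≠ s.idxOf b := fun h => hc <| by
      rw [(List.idxOf_inj hb).1 h.symm, linv_linv]
    simp only [rank]
    rw [hab] at hc_ne ⊢
    exact mod_sub_lt_mod_sub_succ (hab ▸ List.idxOf_lt_length_iff.2 hb) List.idxOf_le_length hc_ne

theorem endLT_of_startsWith {s L : List (β × Bool)} {a b : β × Bool} {e f : EndSeq β}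
    (he : StartsWith e (L ++ [a])) (hf : StartsWith f (L ++ [b])) (hab : a ≠ b)
    (hrank : rank s L.getLast? a < rank s L.getLast? b) : endLT s e f := by
  have heL : StartsWith e L := he.of_prefix (List.prefix_append _ _)
  have hfL : StartsWith f L := hf.of_prefix (List.prefix_append _ _)
  have hea : e L.length = a := by simpa using he L.length (by simp)
  have hfb : f L.length = b := by simpa using hf L.length (by simp)
  refine ⟨L.length, fun j hj => by rw [heL j hj, hfL j hj], by rwa [hea, hfb], ?_⟩
  rwa [heL.prev_eq_getLast?, hfL.prev_eq_getLast?, hea, hfb]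

end Ordering

theorem _root_.List.Nodup.idxOf_eq_succ_of_infix {α : Type*} [BEq α] [LawfulBEq α] {s : List α}
    {a b : α} (hs : s.Nodup) (h : [a, b] <:+: s) : s.idxOf b = s.idxOf a + 1 := by
  obtain ⟨L, R, rfl⟩ := h
  have hs' : (L ++ a :: b :: R).Nodup := by simpa using hs
  have ha := hs'.idxOf_getElem L.length (by simp)
  have hb := hs'.idxOf_getElem (L.length + 1) (by simp)
  simp only [List.getElem_append_right, le_refl, Nat.sub_self, List.getElem_cons_zero,
    le_add_iff_nonneg_right, zero_le, add_tsub_cancel_left, List.getElem_cons_succ] at ha hb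
  simp [ha, hb]

theorem nodup_stdSeq (g p : ℕ) : (stdSeq g p).Nodup := by
  simp only [stdSeq, List.nodup_append, List.nodup_flatMap]
  refine ⟨⟨by simp, (List.nodup_finRange g).pairwise_of_forall_ne ?_⟩,
    ⟨by simp, (List.nodup_finRange p).pairwise_of_forall_ne ?_⟩, ?_⟩
  · intro i _ j _ hij
    simp [Function.onFun, List.Disjoint, hij]
  · intro i _ j _ hij
    simp [Function.onFun, List.Disjoint, hij]
  · simp only [List.mem_flatMap]
    rintro _ ⟨i, -, hi⟩ _ ⟨k, -, hk⟩ rfl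
    simp only [List.mem_cons, List.not_mem_nil, or_false] at hi hk
    aesop

theorem t_infix_stdSeq (g p : ℕ) (k : Fin p) :
    [(Gen.t k, true), (Gen.t k, false)] <:+: stdSeq g p := by
  refine List.IsInfix.trans ?_ (List.suffix_append _ _).isInfix
  exact List.infix_of_mem_flatten (List.mem_map_of_mem (f := fun k : Fin p =>
    ([(Gen.t k, true), (Gen.t k, false)] : List (Gen g p × Bool))) (List.mem_finRange k))

theorem lemma_rep_ii_general (g p : ℕ) (k₀ : Fin p) (w : Sig g p)
    (hw : NotEndT w k₀) :
    ∀ e ∈ shadow (w * T g p k₀ * T g p k₀),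
      ∀ f ∈ shadow (w * (T g p k₀)⁻¹ * (T g p k₀)⁻¹),
        endLT (stdSeq g p) e f := by
  intro e he f hf
  have hT : (w * T g p k₀).toWord = w.toWord ++ [(Gen.t k₀, true)] :=
    toWord_mul_mk_singleton w _ (hw false)
  have hT' : (w * (T g p k₀)⁻¹).toWord = w.toWord ++ [(Gen.t k₀, false)] :=
    toWord_mul_mk_singleton w _ (hw true)
  have he' : StartsWith e (w.toWord ++ [(Gen.t k₀, true)]) :=
    hT ▸ StartsWith.of_mem_shadow_mul_mk (x := (Gen.t k₀, true)) (by simp [hT, linv]) he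
  have hf' : StartsWith f (w.toWord ++ [(Gen.t k₀, false)]) :=
    hT' ▸ StartsWith.of_mem_shadow_mul_mk (x := (Gen.t k₀, false)) (by simp [hT', linv]) hf
  have hinfix := t_infix_stdSeq g p k₀
  exact endLT_of_startsWith he' hf' (by simp) <| rank_lt_rank_of_idxOf_eq_succ
    (hinfix.subset (by simp)) ((nodup_stdSeq g p).idxOf_eq_succ_of_infix hinfix) (hw true)

/-- **Lemma 7.3(ii) (paper)**: for `k₀ ∈ {1,…,p}` and `w ∈ Σ_{g,1,p}` whose
reduced word does not end in `t_{k₀}^{±1}`, every end in the shadow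
`(w t_{k₀} t_{k₀} ◀)` is strictly smaller, in `(∂Σ_{g,1,p}, ≤)`, than every end
in the shadow `(w t̄_{k₀} t̄_{k₀} ◀)`; that is,
`max(w t_{k₀} t_{k₀} ◀) < min(w t̄_{k₀} t̄_{k₀} ◀)`. -/
theorem lemma_rep_ii (g p : ℕ) (hp : 0 < p) (k₀ : Fin p) (w : Sig g p)
    (hw : NotEndT w k₀) :
    ∀ e ∈ shadow (w * T g p k₀ * T g p k₀),
      ∀ f ∈ shadow (w * (T g p k₀)⁻¹ * (T g p k₀)⁻¹),
        endLT (stdSeq g p) e f :=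
  lemma_rep_ii_general g p k₀ w hw

end Paper
end

section
/- Let b ≥ 2, let φ ∈ AM_{g,b,p} and let l ∈ {1,…,b−1}. Then there exists w_l ∈ Σ_{g,b,p} with (z_l^{-1})^φ = w_l^{-1} z_l^{-1} w_l, and for any such w_l one has e_l^φ ∈ w_l^{-1}⟨z_l⟩e_l, i.e. e_l^φ = w_l^{-1} z_l^{r} e_l for some r ∈ ℤ. -/
namespace Paper

open scoped commutatorElement

/-- Generators of `Σ_{g,b,p} ∗ F(e_1,…,e_{b-1})`:
`x_1,…,x_g`, `y_1,…,y_g`, `z_1,…,z_{b-1}`, `t_1,…,t_p`, `e_1,…,e_{b-1}`. -/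
inductive GenB (g b p : ℕ) : Type
  | x : Fin g → GenB g b p
  | y : Fin g → GenB g b p
  | z : Fin (b - 1) → GenB g b p
  | t : Fin p → GenB g b p
  | e : Fin (b - 1) → GenB g b p
  deriving DecidableEq

/-- The free group `Σ_{g,b,p} ∗ F(e_1,…,e_{b-1})`. -/
abbrev Gam (g b p : ℕ) := FreeGroup (GenB g b p)

def Xb (g b p : ℕ) (i : Fin g) : Gam g b p := FreeGroup.of (GenB.x i)
def Yb (g b p : ℕ) (i : Fin g) : Gam g b p := FreeGroup.of (GenB.y i)
def Zb (g b p : ℕ) (l : Fin (b - 1)) : Gam g b p := FreeGroup.of (GenB.z l)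
def Tb (g b p : ℕ) (k : Fin p) : Gam g b p := FreeGroup.of (GenB.t k)
def Eb (g b p : ℕ) (l : Fin (b - 1)) : Gam g b p := FreeGroup.of (GenB.e l)

/-- `Σ_{g,b,p}`, the free factor generated by the `x`'s, `y`'s, `z`'s and
`t`'s. -/
def SigSub (g b p : ℕ) : Subgroup (Gam g b p) :=
  Subgroup.closure {w : Gam g b p |
    (∃ i, w = Xb g b p i) ∨ (∃ i, w = Yb g b p i) ∨
    (∃ l, w = Zb g b p l) ∨ (∃ k, w = Tb g b p k)}

/-- `[x_1,y_1]⋯[x_g,y_g]·z_1⋯z_{b-1}·t_1⋯t_p`. -/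
def bword (g b p : ℕ) : Gam g b p :=
  (List.ofFn fun i : Fin g => ⁅Xb g b p i, Yb g b p i⁆).prod *
    (List.ofFn fun l : Fin (b - 1) => Zb g b p l).prod *
    (List.ofFn fun k : Fin p => Tb g b p k).prod

/-- Membership in the algebraic mapping-class group `AM_{g,b,p}`:
automorphisms of `Σ_{g,b,p} ∗ F(e_1,…,e_{b-1})` mapping `Σ_{g,b,p}` to itself,
fixing `[x_1,y_1]⋯[x_g,y_g]·z_1⋯z_{b-1}·t_1⋯t_p`, fixing each
`e_l⁻¹ z_l⁻¹ e_l`, and permuting the conjugacy classes `{[t_1⁻¹],…,[t_p⁻¹]}`. -/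
def IsAMb {g b p : ℕ} (φ : Gam g b p ≃* Gam g b p) : Prop :=
  (SigSub g b p).map φ.toMonoidHom = SigSub g b p ∧
  φ (bword g b p) = bword g b p ∧
  (∀ l : Fin (b - 1),
    φ ((Eb g b p l)⁻¹ * (Zb g b p l)⁻¹ * Eb g b p l) =
      (Eb g b p l)⁻¹ * (Zb g b p l)⁻¹ * Eb g b p l) ∧
  ∃ π : Equiv.Perm (Fin p), ∀ k : Fin p,
    IsConj ((Tb g b p (π k))⁻¹) (φ ((Tb g b p k)⁻¹))

/-!
Since `φ` fixes `e_l⁻¹ z_l⁻¹ e_l`, the element `v = e_l φ(e_l)⁻¹` conjugates `z_l⁻¹` to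
`φ(z_l⁻¹)`. As `φ(z_l⁻¹)` lies in `Σ`, applying the retraction of `Σ ∗ F(e)` onto `Σ` that kills
the `e`'s turns `v` into a conjugator `w_l ∈ Σ`. Two conjugators `v`, `w_l` differ by `v w_l⁻¹`
in the centralizer of `z_l`, which in a free group is `⟨z_l⟩`: the subgroup generated by `z_l`
and a commuting element is free (Nielsen–Schreier) and abelian, hence cyclic, and `z_l` is not a
proper power. Hence `φ(e_l) = v⁻¹ e_l = w_l⁻¹ z_l^r e_l`.
-/

end Paper

theorem IsFreeGroup.isCyclic_of_isMulCommutative (H : Type*) [Group H] [IsFreeGroup H]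
    [IsMulCommutative H] : IsCyclic H := by
  have : Subsingleton (IsFreeGroup.Generators H) := by
    refine ⟨fun s t => by_contra fun hst => ?_⟩
    classical
    let f : H →* Equiv.Perm (Fin 3) :=
      IsFreeGroup.lift fun u => if u = s then Equiv.swap 0 1 else Equiv.swap 1 2
    have hcomm := congrArg f (mul_comm' (IsFreeGroup.of s) (IsFreeGroup.of t))
    simp only [f, map_mul, IsFreeGroup.lift_of, if_pos, if_neg (Ne.symm hst)] at hcomm
    exact absurd hcomm (by decide)
  rw [← (IsFreeGroup.mulEquiv H).isCyclic]
  cases isEmpty_or_nonempty (IsFreeGroup.Generators H)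
  · infer_instance
  · have := uniqueOfSubsingleton (Classical.arbitrary (IsFreeGroup.Generators H))
    infer_instance

theorem FreeGroup.eq_zpow_of_zpow_eq_of {α : Type*} {a : α} {d : FreeGroup α} {k : ℤ}
    (h : d ^ k = FreeGroup.of a) : d = FreeGroup.of a ^ k := by
  classical
  let expSum : FreeGroup α →* Multiplicative ℤ :=
    FreeGroup.lift fun x => if x = a then Multiplicative.ofAdd 1 else 1
  -- the exponent sum of `of a` in `a` is `1`, so `k = ±1`
  have hk : k * (expSum d).toAdd = 1 := by
    simpa [expSum, mul_comm] using congrArg (fun x => (expSum x).toAdd) h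
  have hkk : k * k = 1 := by
    rcases Int.eq_one_or_neg_one_of_mul_eq_one hk with rfl | rfl <;> rfl
  rw [← h, ← zpow_mul, hkk, zpow_one]

theorem FreeGroup.exists_eq_zpow_of_commute_of {α : Type*} {a : α} {c : FreeGroup α}
    (h : Commute c (FreeGroup.of a)) : ∃ n : ℤ, c = FreeGroup.of a ^ n := by
  let K := Subgroup.closure ({c, FreeGroup.of a} : Set (FreeGroup α))
  have : IsMulCommutative K := Subgroup.isMulCommutative_closure <| by
    simp only [Set.mem_insert_iff, Set.mem_singleton_iff]
    rintro _ (rfl | rfl) _ (rfl | rfl)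
    exacts [rfl, h, h.symm, rfl]
  obtain ⟨d, hd⟩ := IsFreeGroup.isCyclic_of_isMulCommutative K
  obtain ⟨k, hk⟩ := hd ⟨FreeGroup.of a, Subgroup.subset_closure (by simp)⟩
  obtain ⟨m, hm⟩ := hd ⟨c, Subgroup.subset_closure (by simp)⟩
  have hdk : (d : FreeGroup α) ^ k = FreeGroup.of a := congrArg Subtype.val hk
  refine ⟨k * m, ?_⟩
  rw [zpow_mul, ← FreeGroup.eq_zpow_of_zpow_eq_of hdk]
  exact (congrArg Subtype.val hm).symm

section ConjugateFixed

variable {G : Type*} [Group G]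

theorem commute_mul_inv_of_conj_eq {x v w : G} (h : v⁻¹ * x * v = w⁻¹ * x * w) :
    Commute (v * w⁻¹) x := by
  calc v * w⁻¹ * x = v * (w⁻¹ * x * w) * w⁻¹ := by group
    _ = x * (v * w⁻¹) := by rw [← h]; group

theorem map_eq_conj_of_map_conj_eq {F : Type*} [FunLike F G G] [MonoidHomClass F G G] (φ : F)
    {x e : G} (h : φ (e⁻¹ * x * e) = e⁻¹ * x * e) :
    φ x = (e * (φ e)⁻¹)⁻¹ * x * (e * (φ e)⁻¹) := by
  rw [map_mul, map_mul, map_inv] at h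
  calc φ x = φ e * ((φ e)⁻¹ * φ x * φ e) * (φ e)⁻¹ := by group
    _ = (e * (φ e)⁻¹)⁻¹ * x * (e * (φ e)⁻¹) := by rw [h]; group

end ConjugateFixed

namespace Paper

def sigmaRetraction (g b p : ℕ) : Gam g b p →* Gam g b p :=
  FreeGroup.lift fun
    | .e _ => 1
    | u => FreeGroup.of u

theorem sigmaRetraction_mem (g b p : ℕ) (u : Gam g b p) :
    sigmaRetraction g b p u ∈ SigSub g b p := by
  refine FreeGroup.range_lift_le ?_ ⟨u, rfl⟩
  rintro _ ⟨(i | i | l | k | l), rfl⟩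
  exacts [Subgroup.subset_closure (Or.inl ⟨i, rfl⟩),
    Subgroup.subset_closure (Or.inr (Or.inl ⟨i, rfl⟩)),
    Subgroup.subset_closure (Or.inr (Or.inr (Or.inl ⟨l, rfl⟩))),
    Subgroup.subset_closure (Or.inr (Or.inr (Or.inr ⟨k, rfl⟩))), one_mem _]

theorem sigmaRetraction_of_mem {g b p : ℕ} {u : Gam g b p} (hu : u ∈ SigSub g b p) :
    sigmaRetraction g b p u = u := by
  induction hu using Subgroup.closure_induction with
  | mem v hv =>
    rcases hv with ⟨i, rfl⟩ | ⟨i, rfl⟩ | ⟨l, rfl⟩ | ⟨k, rfl⟩ <;> rfl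
  | one => exact map_one _
  | mul x y _ _ hx hy => rw [map_mul, hx, hy]
  | inv x _ hx => rw [map_inv, hx]

theorem Zb_mem_SigSub (g b p : ℕ) (l : Fin (b - 1)) : Zb g b p l ∈ SigSub g b p :=
  Subgroup.subset_closure (Or.inr (Or.inr (Or.inl ⟨l, rfl⟩)))

theorem boundary_conjugator_general (g b p : ℕ)
    (φ : Gam g b p ≃* Gam g b p) (hφ : IsAMb φ) (l : Fin (b - 1)) :
    (∃ w ∈ SigSub g b p,
      φ ((Zb g b p l)⁻¹) = w⁻¹ * (Zb g b p l)⁻¹ * w) ∧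
    ∀ w ∈ SigSub g b p,
      φ ((Zb g b p l)⁻¹) = w⁻¹ * (Zb g b p l)⁻¹ * w →
        ∃ r : ℤ, φ (Eb g b p l) = w⁻¹ * Zb g b p l ^ r * Eb g b p l := by
  obtain ⟨hmap, -, hfix, -⟩ := hφ
  set z := Zb g b p l
  set E := Eb g b p l
  have hz : z ∈ SigSub g b p := Zb_mem_SigSub g b p l
  have hconj : φ z⁻¹ = (E * (φ E)⁻¹)⁻¹ * z⁻¹ * (E * (φ E)⁻¹) :=
    map_eq_conj_of_map_conj_eq φ (hfix l)
  have hφz : φ z⁻¹ ∈ SigSub g b p := hmap ▸ ⟨z⁻¹, inv_mem hz, rfl⟩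
  refine ⟨⟨sigmaRetraction g b p (E * (φ E)⁻¹), sigmaRetraction_mem g b p _, ?_⟩,
    fun w _ hw => ?_⟩
  · rw [← sigmaRetraction_of_mem hφz, hconj]
    simp only [map_mul, map_inv, sigmaRetraction_of_mem hz]
  · have hcomm := commute_mul_inv_of_conj_eq (hconj.symm.trans hw)
    obtain ⟨n, hn⟩ := FreeGroup.exists_eq_zpow_of_commute_of (Commute.inv_right_iff.mp hcomm)
    refine ⟨-n, ?_⟩
    rw [zpow_neg, show z ^ n = E * (φ E)⁻¹ * w⁻¹ from hn.symm]
    group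

/-- **(Paper, Section 2)**: let `b ≥ 2`, `φ ∈ AM_{g,b,p}` and
`l ∈ {1,…,b-1}`.  Then there is `w_l ∈ Σ_{g,b,p}` with
`(z_l⁻¹)^φ = w_l⁻¹ z_l⁻¹ w_l`, and for any such `w_l` one has
`e_l^φ ∈ w_l⁻¹⟨z_l⟩e_l`, i.e. `e_l^φ = w_l⁻¹ z_l^r e_l` for some `r ∈ ℤ`. -/
theorem boundary_conjugator (g b p : ℕ) (hb : 2 ≤ b)
    (φ : Gam g b p ≃* Gam g b p) (hφ : IsAMb φ) (l : Fin (b - 1)) :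
    (∃ w ∈ SigSub g b p,
      φ ((Zb g b p l)⁻¹) = w⁻¹ * (Zb g b p l)⁻¹ * w) ∧
    ∀ w ∈ SigSub g b p,
      φ ((Zb g b p l)⁻¹) = w⁻¹ * (Zb g b p l)⁻¹ * w →
        ∃ r : ℤ, φ (Eb g b p l) = w⁻¹ * Zb g b p l ^ r * Eb g b p l :=
  boundary_conjugator_general g b p φ hφ l

end Paper
end
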